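/- Let J ∈ B(H) be an anti self-adjoint unitary operator on H = ℓ²(ℕ, ℍ), m ∈ 𝕊, and let T ∈ B(H) satisfy TJ = JT, with restriction T_+ := T|_{H_+^{Jm}} : H_+^{Jm} → H_+^{Jm}. Then T is a compact operator on H if and only if T_+ is a compact operator on the complex Hilbert space H_+^{Jm}. -/

import Mathlib

noncomputable section

open Quaternion Filter Topology

/-- The division ring `ℍ` of real quaternions. -/
abbrev Hq := Quaternion ℝ

/-- The quaternionic Hilbert space `H = ℓ²(ℕ, ℍ)`. -/
abbrev Hsp := lp (fun _ : ℕ => Hq) 2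

/-- Right scalar multiplication `x ↦ x · q` on `ℓ²(ℕ, ℍ)` (coordinatewise right
multiplication by the quaternion `q`). -/
def rsmul (q : Hq) (x : Hsp) : Hsp := MulOpposite.op q • x

/-- The quaternionic inner product `⟨x, y⟩ = ∑ₙ x̄ₙ yₙ`. -/
def qinner (x y : Hsp) : Hq := ∑' n, star (x n) * y n

/-- The set `𝕊` of unit imaginary quaternions. -/
def QS : Set Hq := {q | star q = -q ∧ ‖q‖ = 1}

/-- The slice complex plane `ℂ_m = {α + mβ : α, β ∈ ℝ}`. -/
def sliceC (m : Hq) : Set Hq := {q | ∃ α β : ℝ, q = (α : Hq) + m * (β : Hq)}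

/-- The closed upper half slice plane `ℂ_m⁺ = {α + mβ : α ∈ ℝ, β ≥ 0}`. -/
def sliceCplus (m : Hq) : Set Hq :=
  {q | ∃ α β : ℝ, 0 ≤ β ∧ q = (α : Hq) + m * (β : Hq)}

/-- `T : H → H` is a bounded right linear operator, i.e. `T ∈ B(H)`. -/
def IsBoundedRightLinear (T : Hsp → Hsp) : Prop :=
  (∀ x y, T (x + y) = T x + T y) ∧ (∀ q x, T (rsmul q x) = rsmul q (T x)) ∧
    ∃ M : ℝ, ∀ x, ‖T x‖ ≤ M * ‖x‖

/-- `S` is the adjoint of the (bounded) operator `T`: `⟨y, Tx⟩ = ⟨Sy, x⟩` for all `x, y`. -/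
def AdjointOf (T S : Hsp → Hsp) : Prop := ∀ x y, qinner y (T x) = qinner (S y) x

/-- `T` is anti self-adjoint: `T* = -T`. -/
def IsAntiSelfAdjoint (T : Hsp → Hsp) : Prop := AdjointOf T (fun x => -(T x))

/-- `T` is unitary: `T*T = TT* = I`. -/
def IsUnitaryOp (T : Hsp → Hsp) : Prop :=
  ∃ S, AdjointOf T S ∧ (∀ x, S (T x) = x) ∧ (∀ x, T (S x) = x)

/-- The slice Hilbert space `H₊^{Jm} = {u ∈ H : Ju = um}`. -/
def Hplus (J : Hsp → Hsp) (m : Hq) : Set Hsp := {u | J u = rsmul m u}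

/-- `H₋^{Jm} = {u ∈ H : Ju = -um}`. -/
def Hminus (J : Hsp → Hsp) (m : Hq) : Set Hsp := {u | J u = -(rsmul m u)}

/-- `e` is an orthonormal basis of the (closed subspace given by the) set `S`:
each `e r` lies in `S`, the `e r` are orthonormal, and every `x ∈ S` expands as
`x = ∑ᵣ (e r) ⟨e r, x⟩`. Taking `S = Set.univ` gives orthonormal bases of `H`. -/
def IsONBasisOn (S : Set Hsp) (e : ℕ → Hsp) : Prop :=
  (∀ r, e r ∈ S) ∧ (∀ r s, qinner (e r) (e s) = if r = s then 1 else 0) ∧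
    ∀ x ∈ S, HasSum (fun r => rsmul (qinner (e r) x) (e r)) x

/-- A (possibly unbounded) operator in `H`: a domain together with an assignment of
values (only the values on the domain are relevant). -/
structure QOp where
  dom : Set Hsp
  app : Hsp → Hsp

/-- The operator `T` is right linear: its domain is a right `ℍ`-submodule and `T`
is additive and right `ℍ`-homogeneous on it. -/
def QOp.IsRightLinear (T : QOp) : Prop :=
  (0 ∈ T.dom) ∧
  (∀ x ∈ T.dom, ∀ y ∈ T.dom, x + y ∈ T.dom ∧ T.app (x + y) = T.app x + T.app y) ∧
  (∀ x ∈ T.dom, ∀ q : Hq, rsmul q x ∈ T.dom ∧ T.app (rsmul q x) = rsmul q (T.app x))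

/-- `T` is densely defined. -/
def QOp.IsDenselyDefined (T : QOp) : Prop := Dense T.dom

/-- `T` is a closed operator: its graph is closed in `H × H`. -/
def QOp.IsClosedOp (T : QOp) : Prop :=
  IsClosed {p : Hsp × Hsp | p.1 ∈ T.dom ∧ p.2 = T.app p.1}

/-- `S` is the adjoint `T*` of `T`: the domain of `S` is
`{y : x ↦ ⟨y, Tx⟩ is continuous on D(T)}` and `⟨y, Tx⟩ = ⟨Sy, x⟩` there. -/
def QOp.IsAdjointOf (T S : QOp) : Prop :=
  S.dom = {y | ContinuousOn (fun x => qinner y (T.app x)) T.dom} ∧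
  ∀ y ∈ S.dom, ∀ x ∈ T.dom, qinner y (T.app x) = qinner (S.app y) x

/-- Composition `S ∘ T` of partial operators, with the natural domain. -/
def QOp.comp (S T : QOp) : QOp :=
  ⟨{x ∈ T.dom | T.app x ∈ S.dom}, fun x => S.app (T.app x)⟩

/-- Equality of partial operators: equal domains and equal values on the domain. -/
def QOp.Eq (A B : QOp) : Prop := A.dom = B.dom ∧ ∀ x ∈ A.dom, A.app x = B.app x

/-- `T` is normal: `T*T = TT*` (including equality of the domains). -/
def QOp.IsNormal (T : QOp) : Prop :=
  ∃ S : QOp, T.IsAdjointOf S ∧ QOp.Eq (S.comp T) (T.comp S)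

/-- `T` is compact (as an operator on the subspace `S` of `H`): the image of the
closed unit ball of `S` is relatively compact. -/
def IsCompactOn (T : Hsp → Hsp) (S : Set Hsp) : Prop :=
  IsCompact (closure (T '' (Metric.closedBall 0 1 ∩ S)))

/-- `T` has squared Hilbert–Schmidt norm `v` on the subspace `S`:
`∑ᵣ ‖T eᵣ‖² = v` for some orthonormal basis `e` of `S`. -/
def HasHSNormSqOn (T : Hsp → Hsp) (S : Set Hsp) (v : ℝ) : Prop :=
  ∃ e : ℕ → Hsp, IsONBasisOn S e ∧ HasSum (fun r => ‖T (e r)‖ ^ 2) v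

/-- `T` is diagonal: there are an orthonormal basis `{φᵣ}` of `H` contained in `D(T)`
and quaternions `qᵣ` with `Tφᵣ = φᵣ qᵣ`. -/
def QOp.IsDiagonal (T : QOp) : Prop :=
  ∃ e : ℕ → Hsp, IsONBasisOn Set.univ e ∧ (∀ r, e r ∈ T.dom) ∧
    ∃ q : ℕ → Hq, ∀ r, T.app (e r) = rsmul (q r) (e r)

/-- The operator `Δ_q(N) = N² - N(q + q̄) + I|q|²` for a bounded operator `N`. -/
def sphDeltaB (N : Hsp → Hsp) (q : Hq) : Hsp → Hsp :=
  fun x => N (N x) - rsmul (q + star q) (N x) + rsmul ((normSq q : ℝ) : Hq) x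

/-- `q` lies in the spherical resolvent of the bounded operator `N`. -/
def inSphResolventB (N : Hsp → Hsp) (q : Hq) : Prop :=
  (∀ x, sphDeltaB N q x = 0 → x = 0) ∧
  Dense (Set.range (sphDeltaB N q)) ∧
  ∃ M : ℝ, ∀ x, ‖x‖ ≤ M * ‖sphDeltaB N q x‖

/-- The spherical spectrum of a bounded operator. -/
def sphSpectrumB (N : Hsp → Hsp) : Set Hq := {q | ¬ inSphResolventB N q}

/-- The domain `D(N²)` of the square of a partial operator. -/
def QOp.sqDom (N : QOp) : Set Hsp := {x ∈ N.dom | N.app x ∈ N.dom}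

/-- The map underlying `Δ_q(N) = N² - N(q + q̄) + I|q|²`, defined on `D(N²)`. -/
def sphDeltaU (N : QOp) (q : Hq) : Hsp → Hsp :=
  fun x => N.app (N.app x) - rsmul (q + star q) (N.app x) + rsmul ((normSq q : ℝ) : Hq) x

/-- `q` lies in the spherical resolvent of the operator `N ∈ C(H)`. -/
def inSphResolventU (N : QOp) (q : Hq) : Prop :=
  (∀ x ∈ N.sqDom, sphDeltaU N q x = 0 → x = 0) ∧
  Dense (sphDeltaU N q '' N.sqDom) ∧
  ∃ M : ℝ, ∀ x ∈ N.sqDom, ‖x‖ ≤ M * ‖sphDeltaU N q x‖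

/-- The spherical spectrum of `N ∈ C(H)`. -/
def sphSpectrumU (N : QOp) : Set Hq := {q | ¬ inSphResolventU N q}

/-- The circularization `Ω_K = {α + jβ : α + mβ ∈ K, j ∈ 𝕊}` of `K ⊆ ℂ_m`. -/
def circ (m : Hq) (K : Set Hq) : Set Hq :=
  {p | ∃ α β : ℝ, ∃ j ∈ QS, ((α : Hq) + m * (β : Hq) ∈ K) ∧ p = (α : Hq) + j * (β : Hq)}

/-! Pick a unit quaternion `j` anticommuting with `m`. Since `J² = -1` and `J` is isometric,
every `x ∈ H` splits as `x = P + Q` with `P = (x - (Jx)m)/2 ∈ H₊^{Jm}` and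
`Q = (x + (Jx)m)/2 ∈ H₋^{Jm}`, and right multiplication by `j⁻¹` maps `H₋^{Jm}` into `H₊^{Jm}`.
Hence `x = P + u j` with `P, u ∈ H₊^{Jm}` of norm at most `‖x‖`, so the image of the unit ball
under `T` lies in `K + K j`, where `K` is the closure of the image of the unit ball of `H₊^{Jm}`. -/

lemma mul_inv_eq_neg_inv_mul {R : Type*} [DivisionRing R] {a b : R} (h : a * b = -(b * a)) :
    a * b⁻¹ = -(b⁻¹ * a) := by
  rcases eq_or_ne b 0 with rfl | hb
  · simp
  calc a * b⁻¹ = b⁻¹ * (b * a) * b⁻¹ := by rw [← mul_assoc, inv_mul_cancel₀ hb, one_mul]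
    _ = -(b⁻¹ * a) := by rw [← neg_neg (b * a), ← h, mul_neg, neg_mul, mul_assoc, mul_assoc,
      mul_inv_cancel₀ hb, mul_one]

lemma mul_self_eq_neg_one_of_mem_QS {m : Hq} (hm : m ∈ QS) : m * m = -1 := by
  have : m * m = -(m * star m) := by rw [hm.1, mul_neg, neg_neg]
  rw [this, Quaternion.self_mul_star, Quaternion.normSq_eq_norm_mul_self, hm.2]
  norm_num

lemma exists_mul_ne_mul_of_mem_QS {m : Hq} (hm : m ∈ QS) : ∃ p : Hq, m * p ≠ p * m := by
  by_contra! h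
  have key (p : Hq) := Quaternion.ext_iff.mp (h p)
  simp only [Quaternion.re_mul, Quaternion.imI_mul, Quaternion.imJ_mul, Quaternion.imK_mul] at key
  have hi := key ⟨0, 1, 0, 0⟩
  have hj := key ⟨0, 0, 1, 0⟩
  have hre := congrArg QuaternionAlgebra.re hm.1
  -- commuting with `i` and `j` kills the imaginary part, and `star m = -m` kills the real part
  simp only [mul_zero, mul_one, zero_sub, sub_zero, zero_mul, one_mul, add_zero, zero_add, sub_self,
    true_and, re_star, re_neg] at hi hj hre
  have hm0 : m = 0 := by ext <;> simp <;> linarith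
  simp [hm0, QS] at hm

lemma exists_norm_eq_one_mul_eq_neg_mul_of_mem_QS {m : Hq} (hm : m ∈ QS) :
    ∃ j : Hq, ‖j‖ = 1 ∧ m * j = -(j * m) := by
  obtain ⟨p, hp⟩ := exists_mul_ne_mul_of_mem_QS hm
  have hmm := mul_self_eq_neg_one_of_mem_QS hm
  -- the commutator `[m, p]` anticommutes with `m` because `m²` is central
  have hmc : m * (m * p - p * m) = -((m * p - p * m) * m) := by
    linear_combination (norm := noncomm_ring) hmm * p - p * hmm
  have hc : ‖m * p - p * m‖ ≠ 0 := norm_ne_zero_iff.mpr (sub_ne_zero.mpr hp)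
  refine ⟨((‖m * p - p * m‖⁻¹ : ℝ) : Hq) * (m * p - p * m), ?_, ?_⟩
  · rw [norm_mul, Quaternion.norm_coe, norm_inv, norm_norm, inv_mul_cancel₀ hc]
  · rw [← mul_assoc, ← Quaternion.coe_commutes, mul_assoc, hmc, mul_neg, mul_assoc]

lemma rsmul_rsmul (p q : Hq) (x : Hsp) : rsmul q (rsmul p x) = rsmul (p * q) x := by
  simp [rsmul, smul_smul]

lemma one_rsmul (x : Hsp) : rsmul 1 x = x := one_smul _ x

lemma neg_rsmul (q : Hq) (x : Hsp) : rsmul (-q) x = -rsmul q x := by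
  rw [rsmul, MulOpposite.op_neg, neg_smul, rsmul]

lemma add_rsmul (p q : Hq) (x : Hsp) : rsmul (p + q) x = rsmul p x + rsmul q x := by
  rw [rsmul, MulOpposite.op_add, add_smul, rsmul, rsmul]

lemma rsmul_add (q : Hq) (x y : Hsp) : rsmul q (x + y) = rsmul q x + rsmul q y := smul_add _ x y

lemma rsmul_sub (q : Hq) (x y : Hsp) : rsmul q (x - y) = rsmul q x - rsmul q y := smul_sub _ x y

lemma rsmul_neg (q : Hq) (x : Hsp) : rsmul q (-x) = -rsmul q x := smul_neg _ x

lemma norm_rsmul_le (q : Hq) (x : Hsp) : ‖rsmul q x‖ ≤ ‖q‖ * ‖x‖ := by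
  simpa [rsmul, MulOpposite.norm_op] using lp.norm_const_smul_le (by norm_num) (MulOpposite.op q) x

lemma continuous_rsmul (q : Hq) : Continuous (rsmul q) := continuous_const_smul _

lemma summable_star_mul (x y : Hsp) : Summable fun n => star (x n) * y n :=
  .of_norm_bounded (lp.summable_mul (p := 2) (q := 2) (by simpa using .two_two) x y)
    fun n => by rw [norm_mul, _root_.norm_star]

lemma qinner_self (x : Hsp) : qinner x x = ((‖x‖ ^ 2 : ℝ) : Hq) := by
  have h := lp.hasSum_norm (p := 2) (by norm_num) x
  simp only [ENNReal.toReal_ofNat, Real.rpow_two] at h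
  refine ((h.map (algebraMap ℝ Hq) Quaternion.continuous_coe).congr_fun fun n => ?_).tsum_eq
  simp [Quaternion.star_mul_self, Quaternion.normSq_eq_norm_mul_self, sq]

lemma qinner_sub_left (x y z : Hsp) : qinner (x - y) z = qinner x z - qinner y z := by
  simp only [qinner, lp.coeFn_sub, Pi.sub_apply, star_sub, sub_mul]
  exact (summable_star_mul x z).tsum_sub (summable_star_mul y z)

lemma eq_of_forall_qinner_eq {x y : Hsp} (h : ∀ z, qinner x z = qinner y z) : x = y := by
  have h0 := qinner_sub_left x y (x - y)
  rw [h, sub_self, qinner_self, ← Quaternion.coe_zero, Quaternion.coe_inj] at h0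
  simpa [sub_eq_zero] using h0

def IsRightLinear (T : Hsp → Hsp) : Prop :=
  (∀ x y, T (x + y) = T x + T y) ∧ ∀ q x, T (rsmul q x) = rsmul q (T x)

lemma IsBoundedRightLinear.isRightLinear {T : Hsp → Hsp} (hT : IsBoundedRightLinear T) :
    IsRightLinear T :=
  ⟨hT.1, hT.2.1⟩

lemma IsRightLinear.map_sub {T : Hsp → Hsp} (hT : IsRightLinear T) (x y : Hsp) :
    T (x - y) = T x - T y :=
  _root_.map_sub (AddMonoidHom.mk' T hT.1) x y

section Unitary

variable {J : Hsp → Hsp}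

lemma IsUnitaryOp.qinner_map_map (hJ : IsUnitaryOp J) (x y : Hsp) :
    qinner (J x) (J y) = qinner x y := by
  obtain ⟨S, hS, hSJ, -⟩ := hJ
  rw [hS, hSJ]

lemma IsUnitaryOp.norm_map (hJ : IsUnitaryOp J) (x : Hsp) : ‖J x‖ = ‖x‖ := by
  have h := hJ.qinner_map_map x x
  rw [qinner_self, qinner_self, Quaternion.coe_inj] at h
  exact (pow_left_inj₀ (norm_nonneg _) (norm_nonneg _) two_ne_zero).mp h

lemma IsAntiSelfAdjoint.map_map_eq_neg (hJa : IsAntiSelfAdjoint J) (hJu : IsUnitaryOp J)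
    (x : Hsp) : J (J x) = -x :=
  neg_eq_iff_eq_neg.mp <| eq_of_forall_qinner_eq fun z =>
    (hJa z (J x)).symm.trans (hJu.qinner_map_map x z)

end Unitary

section SliceDecomposition

variable {J : Hsp → Hsp} {m : Hq}

lemma rsmul_mem_Hplus (hJ : IsRightLinear J) {q : Hq} (hq : m * q = q * m) {y : Hsp}
    (hy : y ∈ Hplus J m) : rsmul q y ∈ Hplus J m := by
  change J (rsmul q y) = rsmul m (rsmul q y)
  rw [hJ.2, hy, rsmul_rsmul, rsmul_rsmul, hq]

lemma rsmul_mem_Hplus_of_mem_Hminus (hJ : IsRightLinear J) {q : Hq} (hq : m * q = -(q * m))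
    {y : Hsp} (hy : y ∈ Hminus J m) : rsmul q y ∈ Hplus J m := by
  change J (rsmul q y) = rsmul m (rsmul q y)
  rw [hJ.2, hy, rsmul_neg, rsmul_rsmul, rsmul_rsmul, hq, neg_rsmul, neg_neg]

lemma sub_rsmul_map_mem_Hplus (hJ : IsRightLinear J) (hJJ : ∀ x, J (J x) = -x)
    (hm : m * m = -1) (x : Hsp) : x - rsmul m (J x) ∈ Hplus J m := by
  change J (x - rsmul m (J x)) = rsmul m (x - rsmul m (J x))
  rw [hJ.map_sub, hJ.2, hJJ, rsmul_sub, rsmul_rsmul, hm, rsmul_neg, neg_rsmul, one_rsmul]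
  abel

lemma add_rsmul_map_mem_Hminus (hJ : IsRightLinear J) (hJJ : ∀ x, J (J x) = -x)
    (hm : m * m = -1) (x : Hsp) : x + rsmul m (J x) ∈ Hminus J m := by
  change J (x + rsmul m (J x)) = -rsmul m (x + rsmul m (J x))
  rw [hJ.1, hJ.2, hJJ, rsmul_add, rsmul_rsmul, hm, rsmul_neg, neg_rsmul, one_rsmul]
  abel

lemma exists_forall_eq_add_rsmul_mem_Hplus (hJ : IsRightLinear J) (hJa : IsAntiSelfAdjoint J)
    (hJu : IsUnitaryOp J) (hm : m ∈ QS) :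
    ∃ j : Hq, ∀ x, ∃ P ∈ Hplus J m, ∃ u ∈ Hplus J m,
      ‖P‖ ≤ ‖x‖ ∧ ‖u‖ ≤ ‖x‖ ∧ x = P + rsmul j u := by
  obtain ⟨j, hj, hmj⟩ := exists_norm_eq_one_mul_eq_neg_mul_of_mem_QS hm
  have hj0 : j ≠ 0 := norm_ne_zero_iff.mp (by rw [hj]; exact one_ne_zero)
  set h : Hq := ((2⁻¹ : ℝ) : Hq)
  have hh : ‖h‖ = 2⁻¹ := by simp [h]
  have hJJ := hJa.map_map_eq_neg hJu
  have hmm := mul_self_eq_neg_one_of_mem_QS hm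
  have hmJ (x : Hsp) : ‖rsmul m (J x)‖ ≤ ‖x‖ :=
    (norm_rsmul_le _ _).trans (by rw [hm.2, hJu.norm_map, one_mul])
  have half_le {c : Hq} (hc : ‖c‖ = 2⁻¹) {x z : Hsp} (hz : ‖z‖ ≤ 2 * ‖x‖) : ‖rsmul c z‖ ≤ ‖x‖ := by
    have := norm_rsmul_le c z
    rw [hc] at this
    linarith
  refine ⟨j, fun x => ⟨rsmul h (x - rsmul m (J x)), ?_, rsmul (h * j⁻¹) (x + rsmul m (J x)), ?_,
    half_le hh ?_, half_le ?_ ?_, ?_⟩⟩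
  · exact rsmul_mem_Hplus hJ (Quaternion.coe_commutes _ _).symm
      (sub_rsmul_map_mem_Hplus hJ hJJ hmm x)
  · refine rsmul_mem_Hplus_of_mem_Hminus hJ ?_ (add_rsmul_map_mem_Hminus hJ hJJ hmm x)
    rw [← mul_assoc, ← Quaternion.coe_commutes, mul_assoc, mul_inv_eq_neg_inv_mul hmj, mul_neg,
      mul_assoc]
  · exact (norm_sub_le _ _).trans (by linarith [hmJ x])
  · rw [norm_mul, hh, norm_inv, hj, inv_one, mul_one]
  · exact (norm_add_le _ _).trans (by linarith [hmJ x])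
  · have hh_add : h + h = 1 := by rw [← Quaternion.coe_add, ← Quaternion.coe_one]; norm_num
    rw [rsmul_rsmul, mul_assoc, inv_mul_cancel₀ hj0, mul_one, ← rsmul_add, sub_add_add_cancel,
      rsmul_add, ← add_rsmul, hh_add, one_rsmul]

end SliceDecomposition

lemma IsCompactOn.mono {T : Hsp → Hsp} {S S' : Set Hsp} (h : IsCompactOn T S') (hS : S ⊆ S') :
    IsCompactOn T S :=
  h.of_isClosed_subset isClosed_closure
    (closure_mono (Set.image_mono (Set.inter_subset_inter_right _ hS)))

open Pointwise in
lemma isCompactOn_univ_of_forall_eq_add_rsmul {T : Hsp → Hsp} (hT : IsRightLinear T) {S : Set Hsp}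
    (hS : IsCompactOn T S) (j : Hq)
    (hdec : ∀ x, ∃ P ∈ S, ∃ u ∈ S, ‖P‖ ≤ ‖x‖ ∧ ‖u‖ ≤ ‖x‖ ∧ x = P + rsmul j u) :
    IsCompactOn T Set.univ := by
  have hK : IsCompact (_ + rsmul j '' _) := hS.add (hS.image (continuous_rsmul j))
  refine hK.of_isClosed_subset isClosed_closure (closure_minimal ?_ hK.isClosed)
  rintro _ ⟨x, ⟨hx, -⟩, rfl⟩
  rw [mem_closedBall_zero_iff] at hx
  obtain ⟨P, hP, u, hu, hPx, hux, rfl⟩ := hdec x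
  rw [hT.1, hT.2]
  exact Set.add_mem_add
    (subset_closure ⟨P, ⟨mem_closedBall_zero_iff.mpr (hPx.trans hx), hP⟩, rfl⟩)
    (Set.mem_image_of_mem _
      (subset_closure ⟨u, ⟨mem_closedBall_zero_iff.mpr (hux.trans hx), hu⟩, rfl⟩))

theorem compact_iff_slice_restriction_compact_general (J : Hsp → Hsp) (m : Hq) (hm : m ∈ QS)
    (hJlin : IsBoundedRightLinear J) (hJa : IsAntiSelfAdjoint J) (hJu : IsUnitaryOp J)
    (T : Hsp → Hsp) (hT : IsBoundedRightLinear T) :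
    IsCompactOn T Set.univ ↔ IsCompactOn T (Hplus J m) := by
  refine ⟨fun h => h.mono (Set.subset_univ _), fun h => ?_⟩
  obtain ⟨j, hdec⟩ := exists_forall_eq_add_rsmul_mem_Hplus hJlin.isRightLinear hJa hJu hm
  exact isCompactOn_univ_of_forall_eq_add_rsmul hT.isRightLinear h j hdec

/-- For `T ∈ B(H)` commuting with `J`, `T` is compact on `H` if and
only if the restriction `T₊ = T|_{H₊^{Jm}}` is compact on `H₊^{Jm}`. -/
theorem compact_iff_slice_restriction_compact (J : Hsp → Hsp) (m : Hq) (hm : m ∈ QS)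
    (hJlin : IsBoundedRightLinear J) (hJa : IsAntiSelfAdjoint J) (hJu : IsUnitaryOp J)
    (T : Hsp → Hsp) (hT : IsBoundedRightLinear T)
    (hcomm : ∀ x, T (J x) = J (T x)) :
    IsCompactOn T Set.univ ↔ IsCompactOn T (Hplus J m) :=
  compact_iff_slice_restriction_compact_general J m hm hJlin hJa hJu T hT
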